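/- For any polynomial h(t,z) in two noncommuting variables with h(0,0) = 0, the endomorphism σ_h of K⟨x,y,z⟩ given by x ↦ x + z·h(xz − zy, z), y ↦ y + h(xz − zy, z)·z, z ↦ z fixes xz − zy and is an automorphism with inverse σ_{-h}, i.e. σ_h ∘ σ_{-h} = id. -/
import Mathlib


open FreeAlgebra

noncomputable section

variable (K : Type*) [Field K]

local notation "x" => FreeAlgebra.ι K (0 : Fin 3)
local notation "y" => FreeAlgebra.ι K (1 : Fin 3)
local notation "z" => FreeAlgebra.ι K (2 : Fin 3)

/-- Substitution t ↦ xz - zy, z ↦ z, from K⟨t,z⟩ to K⟨x,y,z⟩. -/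
def subst : FreeAlgebra K (Fin 2) →ₐ[K] FreeAlgebra K (Fin 3) :=
  FreeAlgebra.lift K ![x * z - z * y, z]

/-- The endomorphism σ_h of K⟨x,y,z⟩:
x ↦ x + z·h(xz - zy, z), y ↦ y + h(xz - zy, z)·z, z ↦ z. -/
def sigma (h : FreeAlgebra K (Fin 2)) :
    FreeAlgebra K (Fin 3) →ₐ[K] FreeAlgebra K (Fin 3) :=
  FreeAlgebra.lift K
    ![x + z * subst K h, y + subst K h * z, z]


lemma sigma_x (h : FreeAlgebra K (Fin 2)) :
    sigma K h x = x + z * subst K h := by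
  simp [sigma, FreeAlgebra.lift_ι_apply]

lemma sigma_y (h : FreeAlgebra K (Fin 2)) :
    sigma K h y = y + subst K h * z := by
  simp [sigma, FreeAlgebra.lift_ι_apply]

lemma sigma_z (h : FreeAlgebra K (Fin 2)) :
    sigma K h z = z := by
  simp [sigma, FreeAlgebra.lift_ι_apply]

lemma sigma_comm (h : FreeAlgebra K (Fin 2)) :
    sigma K h (x * z - z * y) = x * z - z * y := by
  simp only [map_sub, map_mul, sigma_x, sigma_y, sigma_z]
  noncomm_ring

lemma sigma_subst (h g : FreeAlgebra K (Fin 2)) :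
    sigma K h (subst K g) = subst K g := by
  have : (sigma K h).comp (subst K) = subst K := by
    apply FreeAlgebra.hom_ext
    funext i
    fin_cases i
    · simpa [subst, FreeAlgebra.lift_ι_apply] using sigma_comm K h
    · simpa [subst, FreeAlgebra.lift_ι_apply] using sigma_z K h
  exact congrFun (congrArg (↑·) this) g

lemma sigma_comp (h g : FreeAlgebra K (Fin 2)) :
    (sigma K h).comp (sigma K g) = sigma K (h + g) := by
  apply FreeAlgebra.hom_ext
  funext i
  fin_cases i <;>
    simp [sigma_x, sigma_y, sigma_z, sigma_subst, map_add, mul_add, add_mul, add_assoc]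

lemma sigma_zero : sigma K 0 = AlgHom.id K (FreeAlgebra K (Fin 3)) := by
  apply FreeAlgebra.hom_ext
  funext i
  fin_cases i <;> simp [sigma_x, sigma_y, sigma_z]

/-- For h(t,z) with h(0,0) = 0, the endomorphism σ_h fixes xz - zy and is an
automorphism: σ_h ∘ σ_{-h} = id (and σ_{-h} ∘ σ_h = id). -/
theorem stmt_8 (h : FreeAlgebra K (Fin 2))
    (h0 : (FreeAlgebra.lift K (fun _ : Fin 2 => (0 : K))) h = 0) :
    sigma K h (x * z - z * y) = x * z - z * y ∧
    (sigma K h).comp (sigma K (-h)) = AlgHom.id K (FreeAlgebra K (Fin 3)) ∧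
    (sigma K (-h)).comp (sigma K h) = AlgHom.id K (FreeAlgebra K (Fin 3)) := by
  refine ⟨sigma_comm K h, ?_, ?_⟩
  · rw [sigma_comp, add_neg_cancel, sigma_zero]
  · rw [sigma_comp, neg_add_cancel, sigma_zero]

end
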